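/- arXiv:1105.5102 — 4 statements merged into one kernel-verified Lean document; each statement's English description precedes it below -/
import Mathlib

section
/- Let U ⊆ ℂ be open, let 0 < δ < 1/2, and let ψ : U → ℂ be holomorphic with |ψ(z) − 1| < δ for all z ∈ U. Let g : U → ℂ be the principal square root of ψ. If a, b ∈ U are points such that the closed line segment [a, b] is contained in U, then the ψ-holonomy w_J = ∫₀¹ g(a + t(b − a))·(b − a) dt of the segment and its Euclidean holonomy z_J = b − a satisfy |z_J − w_J| ≤ δ·|z_J|, with strict inequality when a ≠ b; in particular, w_J ≠ 0 whenever a ≠ b. -/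
/-- `g` is the principal square root of `ψ` on `U`: it is holomorphic on `U`, with
`g² = ψ` and `Re g > 0` on `U`. -/
def IsPrincipalSqrtOn (U : Set ℂ) (ψ g : ℂ → ℂ) : Prop :=
  DifferentiableOn ℂ g U ∧ ∀ z ∈ U, g z ^ 2 = ψ z ∧ 0 < (g z).re

/-!
Since `Re g > 0`, we have `|g + 1| ≥ 1`, so `|g - 1| ≤ |g - 1| |g + 1| = |ψ - 1| < δ` on `U`.
Factoring out `b - a`, the defect `z_J - w_J` is `(b - a) ∫₀¹ (1 - g(a + t(b - a))) dt`, and the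
integrand is continuous with norm `< δ` on the compact interval `[0, 1]`, so the integral has
norm `< δ`. As `δ < 1`, the strict estimate also forces `w_J ≠ 0`.
-/

open Set

theorem Complex.norm_sub_one_le_norm_sq_sub_one {w : ℂ} (hw : 0 ≤ w.re) :
    ‖w - 1‖ ≤ ‖w ^ 2 - 1‖ := by
  have h_one_le : 1 ≤ ‖w + 1‖ :=
    calc (1 : ℝ) ≤ (w + 1).re := by simpa using hw
      _ ≤ ‖w + 1‖ := Complex.re_le_norm _
  calc ‖w - 1‖ ≤ ‖w - 1‖ * ‖w + 1‖ := le_mul_of_one_le_right (norm_nonneg _) h_one_le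
    _ = ‖w ^ 2 - 1‖ := by rw [← norm_mul]; ring_nf

theorem Complex.add_ofReal_mul_sub_mem_segment (a b : ℂ) {t : ℝ} (ht : t ∈ Icc (0 : ℝ) 1) :
    a + (t : ℂ) * (b - a) ∈ segment ℝ a b := by
  rw [segment_eq_image']
  exact ⟨t, ht, by simp [Complex.real_smul]⟩

theorem ContinuousOn.comp_segment_param {E : Type*} [TopologicalSpace E] {g : ℂ → E} {a b : ℂ}
    (hg : ContinuousOn g (segment ℝ a b)) :
    ContinuousOn (fun t : ℝ => g (a + (t : ℂ) * (b - a))) (Icc 0 1) :=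
  hg.comp (by fun_prop) fun _ ht => Complex.add_ofReal_mul_sub_mem_segment a b ht

namespace intervalIntegral

variable {E : Type*} [NormedAddCommGroup E] [NormedSpace ℝ E]

theorem norm_integral_lt_of_norm_le_const_of_lt {f : ℝ → E} {a b C : ℝ} (hab : a < b)
    (hf : ContinuousOn f (Icc a b)) (hle : ∀ x ∈ Ioc a b, ‖f x‖ ≤ C)
    (hlt : ∃ c ∈ Icc a b, ‖f c‖ < C) :
    ‖∫ x in a..b, f x‖ < C * (b - a) :=
  calc ‖∫ x in a..b, f x‖ ≤ ∫ x in a..b, ‖f x‖ := norm_integral_le_integral_norm hab.le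
    _ < ∫ _ in a..b, C :=
      integral_lt_integral_of_continuousOn_of_le_of_exists_lt hab hf.norm continuousOn_const
        hle hlt
    _ = C * (b - a) := by rw [integral_const, smul_eq_mul, mul_comm]

end intervalIntegral

theorem holonomy_estimate_general (U : Set ℂ) (δ : ℝ)
    (hδ : δ < 1 / 2) (ψ g : ℂ → ℂ)
    (hψb : ∀ z ∈ U, ‖ψ z - 1‖ < δ)
    (hg : IsPrincipalSqrtOn U ψ g)
    (a b : ℂ)
    (hseg : segment ℝ a b ⊆ U) :
    ‖(b - a) - ∫ t in (0:ℝ)..1, g (a + (t : ℂ) * (b - a)) * (b - a)‖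
        ≤ δ * ‖b - a‖ ∧
    (a ≠ b →
      ‖(b - a) - ∫ t in (0:ℝ)..1, g (a + (t : ℂ) * (b - a)) * (b - a)‖
        < δ * ‖b - a‖) ∧
    (a ≠ b → (∫ t in (0:ℝ)..1, g (a + (t : ℂ) * (b - a)) * (b - a)) ≠ 0) := by
  obtain ⟨hg_diff, hg_sqrt⟩ := hg
  set h : ℝ → ℂ := fun t => g (a + (t : ℂ) * (b - a))
  have h_close : ∀ t ∈ Icc (0 : ℝ) 1, ‖1 - h t‖ < δ := fun t ht => by
    have h_mem := hseg (Complex.add_ofReal_mul_sub_mem_segment a b ht)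
    obtain ⟨h_sq, h_re⟩ := hg_sqrt _ h_mem
    rw [norm_sub_rev]
    exact (Complex.norm_sub_one_le_norm_sq_sub_one h_re.le).trans_lt (h_sq ▸ hψb _ h_mem)
  have h_cont : ContinuousOn h (Icc 0 1) := (hg_diff.continuousOn.mono hseg).comp_segment_param
  have h_mean : ‖1 - ∫ t in (0 : ℝ)..1, h t‖ < δ := by
    have h_int : IntervalIntegrable h MeasureTheory.volume 0 1 :=
      h_cont.intervalIntegrable_of_Icc zero_le_one
    simpa [intervalIntegral.integral_sub intervalIntegrable_const h_int] using
      intervalIntegral.norm_integral_lt_of_norm_le_const_of_lt zero_lt_one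
        (continuousOn_const.sub h_cont) (fun t ht => (h_close t (Ioc_subset_Icc_self ht)).le)
        ⟨0, left_mem_Icc.2 zero_le_one, h_close 0 (left_mem_Icc.2 zero_le_one)⟩
  have h_defect : ‖(b - a) - ∫ t in (0 : ℝ)..1, h t * (b - a)‖
      = ‖1 - ∫ t in (0 : ℝ)..1, h t‖ * ‖b - a‖ := by
    rw [intervalIntegral.integral_mul_const, ← norm_mul, sub_mul, one_mul]
  have h_strict (hab : a ≠ b) : ‖(b - a) - ∫ t in (0 : ℝ)..1, h t * (b - a)‖ < δ * ‖b - a‖ :=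
    h_defect ▸ mul_lt_mul_of_pos_right h_mean (norm_pos_iff.2 (sub_ne_zero.2 hab.symm))
  refine ⟨?_, h_strict, fun hab h_zero => ?_⟩
  · rcases eq_or_ne a b with rfl | hab
    · simp
    · exact (h_strict hab).le
  · have h_lt := h_strict hab
    rw [h_zero, sub_zero] at h_lt
    nlinarith [norm_nonneg (b - a)]

/-- Holonomy estimate (Lemma 2.4 of the paper): if `ψ` is holomorphic on an open set
`U` with `|ψ − 1| < δ < 1/2` on `U`, `g` is the principal square root of `ψ`, and the
segment `[a,b]` lies in `U`, then the `ψ`-holonomy `w_J = ∫₀¹ g(a + t(b−a))·(b−a) dt`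
of the segment and the Euclidean holonomy `z_J = b − a` satisfy
`|z_J − w_J| ≤ δ·|z_J|`, strictly when `a ≠ b`; in particular `w_J ≠ 0` when `a ≠ b`. -/
theorem holonomy_estimate (U : Set ℂ) (hU : IsOpen U) (δ : ℝ)
    (hδ0 : 0 < δ) (hδ : δ < 1 / 2) (ψ g : ℂ → ℂ)
    (hψ : DifferentiableOn ℂ ψ U)
    (hψb : ∀ z ∈ U, ‖ψ z - 1‖ < δ)
    (hg : IsPrincipalSqrtOn U ψ g)
    (a b : ℂ) (ha : a ∈ U) (hb : b ∈ U)
    (hseg : segment ℝ a b ⊆ U) :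
    ‖(b - a) - ∫ t in (0:ℝ)..1, g (a + (t : ℂ) * (b - a)) * (b - a)‖
        ≤ δ * ‖b - a‖ ∧
    (a ≠ b →
      ‖(b - a) - ∫ t in (0:ℝ)..1, g (a + (t : ℂ) * (b - a)) * (b - a)‖
        < δ * ‖b - a‖) ∧
    (a ≠ b → (∫ t in (0:ℝ)..1, g (a + (t : ℂ) * (b - a)) * (b - a)) ≠ 0) :=
  holonomy_estimate_general U δ hδ ψ g hψb hg a b hseg
end

section
/- Let U ⊆ ℂ be open and convex, let 0 < δ < 1/4, let ψ : U → ℂ be holomorphic with |ψ(z) − 1| < δ on U, let g be the principal square root of ψ, and let G be a primitive of g on U. Let a, b ∈ U be distinct with [a, b] ⊆ U, set L = |b − a|, and let d be the Euclidean distance from the segment [a, b] to the complement ℂ ∖ U. If d > 4δL, then every point of the Euclidean segment from G(a) to G(b) lies in G(U), and every such point is within Euclidean distance 2δL of the image G([a, b]) of the segment [a, b] under G. -/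
open Metric Set AffineMap ContinuousLinearMap
open scoped NNReal

theorem Complex.norm_sub_one_le_norm_sq_sub_one_s4 {z : ℂ} (hz : 0 ≤ z.re) :
    ‖z - 1‖ ≤ ‖z ^ 2 - 1‖ := by
  have h_add_one : 1 ≤ ‖z + 1‖ :=
    le_trans (by simpa using hz) (Complex.re_le_norm (z + 1))
  calc ‖z - 1‖ ≤ ‖z - 1‖ * ‖z + 1‖ := le_mul_of_one_le_right (norm_nonneg _) h_add_one
    _ = ‖z ^ 2 - 1‖ := by rw [← norm_mul]; ring_nf

theorem Metric.closedBall_subset_of_lt_infDist_compl {X : Type*} [PseudoMetricSpace X]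
    {s : Set X} {x : X} {r : ℝ} (h : r < infDist x sᶜ) : closedBall x r ⊆ s :=
  compl_compl s ▸ (disjoint_closedBall_of_lt_infDist h).subset_compl_right

theorem Convex.approximatesLinearOn_id_of_hasDerivAt {𝕜 : Type*} [RCLike 𝕜] {f f' : 𝕜 → 𝕜}
    {s : Set 𝕜} (hs : Convex ℝ s) (hf : ∀ z ∈ s, HasDerivAt f (f' z) z) {c : ℝ≥0}
    (hf' : ∀ z ∈ s, ‖f' z - 1‖ ≤ c) :
    ApproximatesLinearOn f (ContinuousLinearMap.id 𝕜 𝕜) s c := by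
  intro x hx y hy
  refine hs.norm_image_sub_le_of_norm_hasFDerivWithin_le'
    (fun z hz => (hf z hz).hasFDerivAt.hasFDerivWithinAt) (fun z hz => ?_) hy hx
  have h_sub : toSpanSingleton 𝕜 (f' z) - ContinuousLinearMap.id 𝕜 𝕜 =
      toSpanSingleton 𝕜 (f' z - 1) := by
    ext; simp
  simpa [h_sub] using hf' z hz

section

variable {𝕜 E : Type*} [NontriviallyNormedField 𝕜] [NormedAddCommGroup E] [NormedSpace 𝕜 E]

/-- `[Nontrivial E]` is what makes the inverse of the identity have norm `1`. -/
theorem ApproximatesLinearOn.closedBall_subset_image_of_id [CompleteSpace E] [Nontrivial E]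
    {f : E → E} {z : E} {ε : ℝ} {c : ℝ≥0}
    (hf : ApproximatesLinearOn f (ContinuousLinearMap.id 𝕜 E) (closedBall z ε) c) (hε : 0 ≤ ε) :
    closedBall (f z) ((1 - c) * ε) ⊆ f '' closedBall z ε := by
  simpa [ContinuousLinearEquiv.toNonlinearRightInverse, SurjOn] using
    hf.surjOn_closedBall_of_nonlinearRightInverse
      (ContinuousLinearEquiv.refl 𝕜 E).toNonlinearRightInverse hε subset_rfl

theorem ApproximatesLinearOn.norm_lineMap_sub_apply_lineMap_le [NormedSpace ℝ E]
    {f : E → E} {a b : E} {c : ℝ≥0}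
    (hf : ApproximatesLinearOn f (ContinuousLinearMap.id 𝕜 E) (segment ℝ a b) c)
    {t : ℝ} (ht : t ∈ Icc (0 : ℝ) 1) :
    ‖lineMap (f a) (f b) t - f (lineMap a b t)‖ ≤ 2 * c * ‖b - a‖ := by
  set z := lineMap a b t
  have hz : z ∈ segment ℝ a b :=
    (segment_eq_image_lineMap ℝ a b).symm ▸ mem_image_of_mem _ ht
  have hz_sub : z - a = t • (b - a) := lineMap_vsub_left a b t
  have hfz_sub : lineMap (f a) (f b) t - f a = t • (f b - f a) := lineMap_vsub_left (f a) (f b) t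
  have hab := hf b (right_mem_segment ℝ a b) a (left_mem_segment ℝ a b)
  have hza := hf z hz a (left_mem_segment ℝ a b)
  rw [ContinuousLinearMap.id_apply] at hab hza
  rw [hz_sub, norm_smul, Real.norm_eq_abs, abs_of_nonneg ht.1] at hza
  calc ‖lineMap (f a) (f b) t - f z‖
      = ‖t • (f b - f a - (b - a)) - (f z - f a - t • (b - a))‖ := by
        rw [smul_sub, ← hfz_sub]; congr 1; abel
    _ ≤ t * (c * ‖b - a‖) + c * (t * ‖b - a‖) := by
        refine (norm_sub_le _ _).trans (add_le_add ?_ hza)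
        rw [norm_smul, Real.norm_eq_abs, abs_of_nonneg ht.1]
        exact mul_le_mul_of_nonneg_left hab ht.1
    _ ≤ 2 * c * ‖b - a‖ := by
        nlinarith [mul_nonneg (mul_nonneg c.coe_nonneg (norm_nonneg (b - a))) (sub_nonneg.2 ht.2)]

end

theorem geodesic_segment_exists_general (U : Set ℂ)
    (δ : ℝ) (hδ0 : 0 < δ) (hδ : δ < 1 / 4) (ψ g G : ℂ → ℂ)
    (hψb : ∀ z ∈ U, ‖ψ z - 1‖ < δ)
    (hg : IsPrincipalSqrtOn U ψ g)
    (hG : ∀ z ∈ U, HasDerivAt G (g z) z)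
    (a b : ℂ)
    (hseg : segment ℝ a b ⊆ U)
    (L d : ℝ) (hL : L = ‖b - a‖)
    (hd : d = ⨅ x : segment ℝ a b, Metric.infDist (x : ℂ) Uᶜ)
    (hdL : d > 4 * δ * L) :
    ∀ w ∈ segment ℝ (G a) (G b),
      w ∈ G '' U ∧ Metric.infDist w (G '' segment ℝ a b) ≤ 2 * δ * L := by
  have hL0 : 0 ≤ L := hL ▸ norm_nonneg _
  have hg_near_one : ∀ z ∈ U, ‖g z - 1‖ ≤ (⟨δ, hδ0.le⟩ : ℝ≥0) := fun z hz => by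
    obtain ⟨hsq, hre⟩ := hg.2 z hz
    exact (Complex.norm_sub_one_le_norm_sq_sub_one_s4 hre.le).trans (hsq ▸ (hψb z hz).le)
  have hG_approx : ∀ s ⊆ U, Convex ℝ s →
      ApproximatesLinearOn G (ContinuousLinearMap.id ℂ ℂ) s ⟨δ, hδ0.le⟩ := fun s hsU hs =>
    hs.approximatesLinearOn_id_of_hasDerivAt (fun z hz => hG z (hsU hz))
      (fun z hz => hg_near_one z (hsU hz))
  rw [segment_eq_image_lineMap]
  rintro _ ⟨t, ht, rfl⟩
  set z := lineMap a b t
  have hz : z ∈ segment ℝ a b := (segment_eq_image_lineMap ℝ a b).symm ▸ mem_image_of_mem _ ht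
  have h_close : ‖lineMap (G a) (G b) t - G z‖ ≤ 2 * δ * L :=
    hL ▸ (hG_approx _ hseg (convex_segment a b)).norm_lineMap_sub_apply_lineMap_le ht
  have h_ball : closedBall z (3 * δ * L) ⊆ U := by
    have hd_le : d ≤ infDist z Uᶜ :=
      hd ▸ ciInf_le ⟨0, by rintro _ ⟨y, rfl⟩; exact infDist_nonneg⟩ (⟨z, hz⟩ : segment ℝ a b)
    exact closedBall_subset_of_lt_infDist_compl (lt_of_lt_of_le (by nlinarith) hd_le)
  refine ⟨?_, (infDist_le_dist_of_mem (mem_image_of_mem G hz)).trans (by rwa [dist_eq_norm])⟩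
  obtain ⟨x, hx, hGx⟩ := (hG_approx _ h_ball (convex_closedBall _ _)).closedBall_subset_image_of_id
    (by positivity) (show lineMap (G a) (G b) t ∈ closedBall (G z) ((1 - δ) * (3 * δ * L)) by
      rw [mem_closedBall, dist_eq_norm]
      nlinarith [mul_nonneg (mul_nonneg hδ0.le hL0) (by linarith : (0 : ℝ) ≤ 1 - 3 * δ)])
  exact ⟨x, h_ball hx, hGx⟩

/-- Part (iii) of Lemma 2.5 of the paper, in the planar model: with `ψ`, `g`, `G` as
before on an open convex `U`, `a ≠ b` in `U` with `[a,b] ⊆ U`, `L = |b − a|`, and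
`d` the Euclidean distance from the segment `[a,b]` to `ℂ ∖ U` satisfying `d > 4δL`,
every point of the straight segment from `G a` to `G b` lies in `G(U)` and is within
distance `2δL` of `G([a,b])`. -/
theorem geodesic_segment_exists (U : Set ℂ) (hU : IsOpen U) (hconv : Convex ℝ U)
    (δ : ℝ) (hδ0 : 0 < δ) (hδ : δ < 1 / 4) (ψ g G : ℂ → ℂ)
    (hψ : DifferentiableOn ℂ ψ U)
    (hψb : ∀ z ∈ U, ‖ψ z - 1‖ < δ)
    (hg : IsPrincipalSqrtOn U ψ g)
    (hG : ∀ z ∈ U, HasDerivAt G (g z) z)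
    (a b : ℂ) (ha : a ∈ U) (hb : b ∈ U) (hab : a ≠ b)
    (hseg : segment ℝ a b ⊆ U)
    (L d : ℝ) (hL : L = ‖b - a‖)
    (hd : d = ⨅ x : segment ℝ a b, Metric.infDist (x : ℂ) Uᶜ)
    (hdL : d > 4 * δ * L) :
    ∀ w ∈ segment ℝ (G a) (G b),
      w ∈ G '' U ∧ Metric.infDist w (G '' segment ℝ a b) ≤ 2 * δ * L :=
  geodesic_segment_exists_general U δ hδ0 hδ ψ g G hψb hg hG a b hseg L d hL hd hdL
end

section
/- Let Ω ⊆ ℂ be open and let η₁, η₂ : Ω → ℝ be smooth (C^∞). Define the curvature functions K_j = −4·e^{−2η_j}·∂∂̄η_j (j = 1, 2), which are real-valued, and let b = ∂∂η₂ − (∂η₂)² − ∂∂η₁ + (∂η₁)² (the coefficient of the Schwarzian derivative B(e^{η₁}|dz|, e^{η₂}|dz|)). Then on all of Ω one has the identity ∂̄b = (1/4)·(e^{2η₁}·∂K₁ − e^{2η₂}·∂K₂). -/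
/-- The Wirtinger derivative `∂u(z) = (1/2)(u_x(z) − i·u_y(z))`, expressed via the real
Fréchet derivative of `u` evaluated at `1` and at `i`. -/
noncomputable def wirtD (u : ℂ → ℂ) (z : ℂ) : ℂ :=
  (1 / 2) * (fderiv ℝ u z 1 - Complex.I * fderiv ℝ u z Complex.I)

/-- The conjugate Wirtinger derivative `∂̄u(z) = (1/2)(u_x(z) + i·u_y(z))`. -/
noncomputable def wirtDBar (u : ℂ → ℂ) (z : ℂ) : ℂ :=
  (1 / 2) * (fderiv ℝ u z 1 + Complex.I * fderiv ℝ u z Complex.I)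

open Complex in
lemma wirtD_congr {u v : ℂ → ℂ} {z : ℂ} (h : u =ᶠ[nhds z] v) : wirtD u z = wirtD v z := by
  unfold wirtD; rw [h.fderiv_eq]

lemma wirtDBar_congr {u v : ℂ → ℂ} {z : ℂ} (h : u =ᶠ[nhds z] v) :
    wirtDBar u z = wirtDBar v z := by
  unfold wirtDBar; rw [h.fderiv_eq]

lemma wirtD_sub {u v : ℂ → ℂ} {z : ℂ} (hu : DifferentiableAt ℝ u z)
    (hv : DifferentiableAt ℝ v z) :
    wirtD (fun w => u w - v w) z = wirtD u z - wirtD v z := by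
  unfold wirtD; rw [fderiv_fun_sub hu hv]; simp; ring

lemma wirtD_add {u v : ℂ → ℂ} {z : ℂ} (hu : DifferentiableAt ℝ u z)
    (hv : DifferentiableAt ℝ v z) :
    wirtD (fun w => u w + v w) z = wirtD u z + wirtD v z := by
  unfold wirtD; rw [fderiv_fun_add hu hv]; simp; ring

lemma wirtDBar_sub {u v : ℂ → ℂ} {z : ℂ} (hu : DifferentiableAt ℝ u z)
    (hv : DifferentiableAt ℝ v z) :
    wirtDBar (fun w => u w - v w) z = wirtDBar u z - wirtDBar v z := by
  unfold wirtDBar; rw [fderiv_fun_sub hu hv]; simp; ring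

lemma wirtDBar_add {u v : ℂ → ℂ} {z : ℂ} (hu : DifferentiableAt ℝ u z)
    (hv : DifferentiableAt ℝ v z) :
    wirtDBar (fun w => u w + v w) z = wirtDBar u z + wirtDBar v z := by
  unfold wirtDBar; rw [fderiv_fun_add hu hv]; simp; ring

lemma wirtD_mul {u v : ℂ → ℂ} {z : ℂ} (hu : DifferentiableAt ℝ u z)
    (hv : DifferentiableAt ℝ v z) :
    wirtD (fun w => u w * v w) z = u z * wirtD v z + v z * wirtD u z := by
  unfold wirtD; rw [fderiv_fun_mul hu hv]; simp [smul_eq_mul]; ring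

lemma wirtDBar_mul {u v : ℂ → ℂ} {z : ℂ} (hu : DifferentiableAt ℝ u z)
    (hv : DifferentiableAt ℝ v z) :
    wirtDBar (fun w => u w * v w) z = u z * wirtDBar v z + v z * wirtDBar u z := by
  unfold wirtDBar; rw [fderiv_fun_mul hu hv]; simp [smul_eq_mul]; ring

lemma wirtD_const_mul {u : ℂ → ℂ} {z : ℂ} (c : ℂ) (hu : DifferentiableAt ℝ u z) :
    wirtD (fun w => c * u w) z = c * wirtD u z := by
  unfold wirtD; rw [fderiv_const_mul hu c]; simp [smul_eq_mul]; ring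

lemma wirtDBar_sq {u : ℂ → ℂ} {z : ℂ} (hu : DifferentiableAt ℝ u z) :
    wirtDBar (fun w => u w ^ 2) z = 2 * u z * wirtDBar u z := by
  have := wirtDBar_mul hu hu
  simp only [← sq] at this
  rw [this]; ring

lemma wirtD_exp {u : ℂ → ℂ} {z : ℂ} (hu : DifferentiableAt ℝ u z) :
    wirtD (fun w => Complex.exp (u w)) z = Complex.exp (u z) * wirtD u z := by
  have hE : HasFDerivAt (fun w => Complex.exp (u w))
      ((((1 : ℂ →L[ℂ] ℂ).smulRight (Complex.exp (u z))).restrictScalars ℝ).comp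
        (fderiv ℝ u z)) z :=
    ((Complex.hasDerivAt_exp (u z)).hasFDerivAt.restrictScalars ℝ).comp z hu.hasFDerivAt
  unfold wirtD
  rw [hE.fderiv]
  simp [smul_eq_mul]
  ring

/-- Commutation of the Wirtinger derivatives for `C^∞` functions. -/
lemma wirtD_wirtDBar_comm {u : ℂ → ℂ} {z : ℂ} (hu : ContDiffAt ℝ (⊤ : ℕ∞) u z) :
    wirtD (wirtDBar u) z = wirtDBar (wirtD u) z := by
  have hsymm : IsSymmSndFDerivAt ℝ u z :=
    hu.isSymmSndFDerivAt (by rw [minSmoothness_of_isRCLikeNormedField]; norm_cast)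
  have hd2 : DifferentiableAt ℝ (fderiv ℝ u) z := by
    have h : ContDiffAt ℝ ((1 : ℕ∞) : WithTop ℕ∞) (fderiv ℝ u) z :=
      hu.fderiv_right (by norm_cast)
    exact h.differentiableAt (by norm_cast)
  have hA : DifferentiableAt ℝ (fun w => fderiv ℝ u w 1) z :=
    hd2.clm_apply (differentiableAt_const _)
  have hB : DifferentiableAt ℝ (fun w => fderiv ℝ u w Complex.I) z :=
    hd2.clm_apply (differentiableAt_const _)
  have hA' : ∀ v : ℂ, fderiv ℝ (fun w => fderiv ℝ u w 1) z v
      = fderiv ℝ (fderiv ℝ u) z v 1 := by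
    intro v
    rw [fderiv_clm_apply hd2 (differentiableAt_const _)]
    simp
  have hB' : ∀ v : ℂ, fderiv ℝ (fun w => fderiv ℝ u w Complex.I) z v
      = fderiv ℝ (fderiv ℝ u) z v Complex.I := by
    intro v
    rw [fderiv_clm_apply hd2 (differentiableAt_const _)]
    simp
  have key : ∀ v s : ℂ,
      fderiv ℝ (fun w => (1/2 : ℂ) * (fderiv ℝ u w 1 + s * fderiv ℝ u w Complex.I)) z v
        = (1/2 : ℂ) * (fderiv ℝ (fderiv ℝ u) z v 1
            + s * fderiv ℝ (fderiv ℝ u) z v Complex.I) := by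
    intro v s
    rw [fderiv_const_mul (a := fun w => fderiv ℝ u w 1 + s * fderiv ℝ u w Complex.I)
        (hA.add (hB.const_mul s)) ((1:ℂ)/2),
      fderiv_fun_add hA (hB.const_mul s), fderiv_const_mul hB s]
    simp only [ContinuousLinearMap.smul_apply, ContinuousLinearMap.add_apply, smul_eq_mul,
      hA', hB']
  have key' : ∀ v : ℂ,
      fderiv ℝ (fun w => (1/2 : ℂ) * (fderiv ℝ u w 1 - Complex.I * fderiv ℝ u w Complex.I)) z v
        = (1/2 : ℂ) * (fderiv ℝ (fderiv ℝ u) z v 1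
            - Complex.I * fderiv ℝ (fderiv ℝ u) z v Complex.I) := by
    intro v
    rw [fderiv_const_mul (a := fun w => fderiv ℝ u w 1 - Complex.I * fderiv ℝ u w Complex.I)
        (hA.sub (hB.const_mul Complex.I)) ((1:ℂ)/2),
      fderiv_fun_sub hA (hB.const_mul Complex.I), fderiv_const_mul hB Complex.I]
    simp only [ContinuousLinearMap.smul_apply, ContinuousLinearMap.sub_apply, smul_eq_mul,
      hA', hB']
  have eBar : wirtDBar u
      = fun w => (1/2 : ℂ) * (fderiv ℝ u w 1 + Complex.I * fderiv ℝ u w Complex.I) := rfl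
  have eD : wirtD u
      = fun w => (1/2 : ℂ) * (fderiv ℝ u w 1 - Complex.I * fderiv ℝ u w Complex.I) := rfl
  rw [wirtD, wirtDBar, eBar, eD, key 1 Complex.I, key Complex.I Complex.I,
    key' 1, key' Complex.I]
  have hs := hsymm 1 Complex.I
  linear_combination (Complex.I / 2) * hs

lemma wirtD_contDiffOn {Ω : Set ℂ} (hΩ : IsOpen Ω) {u : ℂ → ℂ}
    (hu : ContDiffOn ℝ (⊤ : ℕ∞) u Ω) : ContDiffOn ℝ (⊤ : ℕ∞) (wirtD u) Ω := by
  have hF : ContDiffOn ℝ (⊤ : ℕ∞) (fun w => fderiv ℝ u w) Ω :=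
    hu.fderiv_of_isOpen hΩ (by norm_cast)
  have h1 : ContDiffOn ℝ (⊤ : ℕ∞) (fun w => fderiv ℝ u w 1) Ω :=
    hF.clm_apply contDiffOn_const
  have hI : ContDiffOn ℝ (⊤ : ℕ∞) (fun w => fderiv ℝ u w Complex.I) Ω :=
    hF.clm_apply contDiffOn_const
  exact contDiffOn_const.mul (h1.sub (contDiffOn_const.mul hI))

lemma wirtDBar_contDiffOn {Ω : Set ℂ} (hΩ : IsOpen Ω) {u : ℂ → ℂ}
    (hu : ContDiffOn ℝ (⊤ : ℕ∞) u Ω) : ContDiffOn ℝ (⊤ : ℕ∞) (wirtDBar u) Ω := by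
  have hF : ContDiffOn ℝ (⊤ : ℕ∞) (fun w => fderiv ℝ u w) Ω :=
    hu.fderiv_of_isOpen hΩ (by norm_cast)
  have h1 : ContDiffOn ℝ (⊤ : ℕ∞) (fun w => fderiv ℝ u w 1) Ω :=
    hF.clm_apply contDiffOn_const
  have hI : ContDiffOn ℝ (⊤ : ℕ∞) (fun w => fderiv ℝ u w Complex.I) Ω :=
    hF.clm_apply contDiffOn_const
  exact contDiffOn_const.mul (h1.add (contDiffOn_const.mul hI))

/-- The computation underlying Lemma 2.8 of the paper: for smooth log-densities
`η₁, η₂` on an open set `Ω ⊆ ℂ`, with Gaussian curvatures `K_j = −4e^{−2η_j}∂∂̄η_j`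
and Schwarzian coefficient `b = ∂∂η₂ − (∂η₂)² − ∂∂η₁ + (∂η₁)²`, one has
`∂̄b = (1/4)(e^{2η₁}∂K₁ − e^{2η₂}∂K₂)` on `Ω`. -/
theorem dbar_schwarzian_eq_curvature_term (Ω : Set ℂ) (hΩ : IsOpen Ω)
    (η₁ η₂ : ℂ → ℝ)
    (h1 : ContDiffOn ℝ (⊤ : ℕ∞) η₁ Ω) (h2 : ContDiffOn ℝ (⊤ : ℕ∞) η₂ Ω)
    (K₁ K₂ b : ℂ → ℂ)
    (hK1 : ∀ z ∈ Ω, K₁ z =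
      -4 * Complex.exp (-2 * (η₁ z : ℂ)) * wirtD (wirtDBar fun w => (η₁ w : ℂ)) z)
    (hK2 : ∀ z ∈ Ω, K₂ z =
      -4 * Complex.exp (-2 * (η₂ z : ℂ)) * wirtD (wirtDBar fun w => (η₂ w : ℂ)) z)
    (hb : ∀ z ∈ Ω, b z =
      wirtD (wirtD fun w => (η₂ w : ℂ)) z - (wirtD (fun w => (η₂ w : ℂ)) z) ^ 2
        - wirtD (wirtD fun w => (η₁ w : ℂ)) z + (wirtD (fun w => (η₁ w : ℂ)) z) ^ 2) :
    ∀ z ∈ Ω, wirtDBar b z =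
      (1 / 4) * (Complex.exp (2 * (η₁ z : ℂ)) * wirtD K₁ z
        - Complex.exp (2 * (η₂ z : ℂ)) * wirtD K₂ z) := by
  intro z hz
  -- complexified log-densities
  set f₁ : ℂ → ℂ := fun w => (η₁ w : ℂ) with hf₁
  set f₂ : ℂ → ℂ := fun w => (η₂ w : ℂ) with hf₂
  have hcf₁ : ContDiffOn ℝ (⊤ : ℕ∞) f₁ Ω :=
    (Complex.ofRealCLM.contDiff.comp_contDiffOn (h1.of_le (by simp)))
  have hcf₂ : ContDiffOn ℝ (⊤ : ℕ∞) f₂ Ω :=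
    (Complex.ofRealCLM.contDiff.comp_contDiffOn (h2.of_le (by simp)))
  have hmem : Ω ∈ nhds z := hΩ.mem_nhds hz
  -- generic facts for a single smooth function f
  have main : ∀ f : ℂ → ℂ, ContDiffOn ℝ (⊤ : ℕ∞) f Ω →
      (wirtDBar (wirtD (wirtD f)) z - 2 * wirtD f z * wirtDBar (wirtD f) z
        = wirtD (wirtD (wirtDBar f)) z - 2 * wirtD f z * wirtD (wirtDBar f) z)
      ∧ (Complex.exp (2 * f z) *
          wirtD (fun w => -4 * Complex.exp (-2 * f w) * wirtD (wirtDBar f) w) z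
        = -4 * (wirtD (wirtD (wirtDBar f)) z - 2 * wirtD f z * wirtD (wirtDBar f) z)) := by
    intro f hf
    have hat : ∀ {w : ℂ}, w ∈ Ω → ContDiffAt ℝ (⊤ : ℕ∞) f w :=
      fun hw => hf.contDiffAt (hΩ.mem_nhds hw)
    have hDf : ContDiffOn ℝ (⊤ : ℕ∞) (wirtD f) Ω := wirtD_contDiffOn hΩ hf
    have hDbf : ContDiffOn ℝ (⊤ : ℕ∞) (wirtDBar f) Ω := wirtDBar_contDiffOn hΩ hf
    have hDDbf : ContDiffOn ℝ (⊤ : ℕ∞) (wirtD (wirtDBar f)) Ω := wirtD_contDiffOn hΩ hDbf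
    have hdiffAt : ∀ {u : ℂ → ℂ}, ContDiffOn ℝ (⊤ : ℕ∞) u Ω → DifferentiableAt ℝ u z :=
      fun hu => (hu.contDiffAt hmem).differentiableAt (by norm_cast)
    -- commutation on Ω
    have hcommΩ : ∀ w ∈ Ω, wirtDBar (wirtD f) w = wirtD (wirtDBar f) w :=
      fun w hw => (wirtD_wirtDBar_comm (hat hw)).symm
    have hcommEv : wirtDBar (wirtD f) =ᶠ[nhds z] wirtD (wirtDBar f) :=
      Filter.eventually_of_mem hmem hcommΩ
    constructor
    · -- third-order commutation
      have h3 : wirtDBar (wirtD (wirtD f)) z = wirtD (wirtD (wirtDBar f)) z := by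
        rw [(wirtD_wirtDBar_comm (hDf.contDiffAt hmem)).symm, wirtD_congr hcommEv]
      rw [h3, hcommΩ z hz]
    · -- curvature side
      have hdf := hdiffAt hf
      have hdC := hdiffAt hDDbf
      have hdE : DifferentiableAt ℝ (fun w => Complex.exp (-2 * f w)) z := by
        have h2f : DifferentiableAt ℝ (fun w => (-2 : ℂ) * f w) z := hdf.const_mul _
        have hE : HasFDerivAt (fun w => Complex.exp ((-2 : ℂ) * f w)) _ z :=
          ((Complex.hasDerivAt_exp ((-2 : ℂ) * f z)).hasFDerivAt.restrictScalars ℝ).comp z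
            h2f.hasFDerivAt
        exact hE.differentiableAt
      have step1 :
          wirtD (fun w => -4 * Complex.exp (-2 * f w) * wirtD (wirtDBar f) w) z
            = -4 * (Complex.exp (-2 * f z) * wirtD (wirtD (wirtDBar f)) z
              + wirtD (wirtDBar f) z * wirtD (fun w => Complex.exp (-2 * f w)) z) := by
        have e : (fun w => -4 * Complex.exp (-2 * f w) * wirtD (wirtDBar f) w)
            = fun w => (-4 : ℂ) * (Complex.exp (-2 * f w) * wirtD (wirtDBar f) w) := by
          funext w; ring
        rw [e, wirtD_const_mul (u := fun w => Complex.exp (-2 * f w) * wirtD (wirtDBar f) w) _ (hdE.mul hdC), wirtD_mul hdE hdC]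
      have step2 : wirtD (fun w => Complex.exp (-2 * f w)) z
          = Complex.exp (-2 * f z) * (-2 * wirtD f z) := by
        have := wirtD_exp (u := fun w => (-2 : ℂ) * f w) (hdf.const_mul _)
        rw [this, wirtD_const_mul _ hdf]
      rw [step1, step2]
      have hcancel : Complex.exp (2 * f z) * Complex.exp (-2 * f z) = 1 := by
        rw [← Complex.exp_add]; ring_nf; exact Complex.exp_zero
      calc Complex.exp (2 * f z) * (-4 * (Complex.exp (-2 * f z) * wirtD (wirtD (wirtDBar f)) z
              + wirtD (wirtDBar f) z * (Complex.exp (-2 * f z) * (-2 * wirtD f z))))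
          = (Complex.exp (2 * f z) * Complex.exp (-2 * f z)) *
              (-4 * (wirtD (wirtD (wirtDBar f)) z - 2 * wirtD f z * wirtD (wirtDBar f) z)) := by
            ring
        _ = -4 * (wirtD (wirtD (wirtDBar f)) z - 2 * wirtD f z * wirtD (wirtDBar f) z) := by
            rw [hcancel]; ring
  have m1 := main f₁ hcf₁
  have m2 := main f₂ hcf₂
  -- rewrite wirtD K_j via eventual equality
  have hK1' : wirtD K₁ z
      = wirtD (fun w => -4 * Complex.exp (-2 * f₁ w) * wirtD (wirtDBar f₁) w) z :=
    wirtD_congr (Filter.eventually_of_mem hmem hK1)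
  have hK2' : wirtD K₂ z
      = wirtD (fun w => -4 * Complex.exp (-2 * f₂ w) * wirtD (wirtDBar f₂) w) z :=
    wirtD_congr (Filter.eventually_of_mem hmem hK2)
  -- rewrite wirtDBar b via eventual equality
  have hb' : wirtDBar b z = wirtDBar (fun w =>
      wirtD (wirtD f₂) w - (wirtD f₂ w) ^ 2 - wirtD (wirtD f₁) w + (wirtD f₁ w) ^ 2) z :=
    wirtDBar_congr (Filter.eventually_of_mem hmem hb)
  -- differentiability of the pieces
  have hdiffAt : ∀ {u : ℂ → ℂ}, ContDiffOn ℝ (⊤ : ℕ∞) u Ω → DifferentiableAt ℝ u z :=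
    fun hu => (hu.contDiffAt hmem).differentiableAt (by norm_cast)
  have hP₁ := hdiffAt (wirtD_contDiffOn hΩ (wirtD_contDiffOn hΩ hcf₁))
  have hP₂ := hdiffAt (wirtD_contDiffOn hΩ (wirtD_contDiffOn hΩ hcf₂))
  have hQ₁ := hdiffAt (wirtD_contDiffOn hΩ hcf₁)
  have hQ₂ := hdiffAt (wirtD_contDiffOn hΩ hcf₂)
  have hQ₁sq : DifferentiableAt ℝ (fun w => (wirtD f₁ w) ^ 2) z := by
    have : DifferentiableAt ℝ (fun w => wirtD f₁ w * wirtD f₁ w) z := hQ₁.mul hQ₁; simpa [← sq] using this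
  have hQ₂sq : DifferentiableAt ℝ (fun w => (wirtD f₂ w) ^ 2) z := by
    have : DifferentiableAt ℝ (fun w => wirtD f₂ w * wirtD f₂ w) z := hQ₂.mul hQ₂; simpa [← sq] using this
  -- expand the left-hand side
  rw [hb', wirtDBar_add (u := fun w => wirtD (wirtD f₂) w - (wirtD f₂ w) ^ 2 - wirtD (wirtD f₁) w)
      ((hP₂.sub hQ₂sq).sub hP₁) hQ₁sq,
    wirtDBar_sub (u := fun w => wirtD (wirtD f₂) w - (wirtD f₂ w) ^ 2) (hP₂.sub hQ₂sq) hP₁, wirtDBar_sub hP₂ hQ₂sq,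
    wirtDBar_sq hQ₂, wirtDBar_sq hQ₁]
  rw [hK1', hK2']
  -- combine
  have lhs_eq : wirtDBar (wirtD (wirtD f₂)) z - 2 * wirtD f₂ z * wirtDBar (wirtD f₂) z
      - wirtDBar (wirtD (wirtD f₁)) z + 2 * wirtD f₁ z * wirtDBar (wirtD f₁) z
      = (wirtD (wirtD (wirtDBar f₂)) z - 2 * wirtD f₂ z * wirtD (wirtDBar f₂) z)
        - (wirtD (wirtD (wirtDBar f₁)) z - 2 * wirtD f₁ z * wirtD (wirtDBar f₁) z) := by
    have e1 := m1.1
    have e2 := m2.1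
    linear_combination e2 - e1
  calc wirtDBar (wirtD (wirtD f₂)) z - 2 * wirtD f₂ z * wirtDBar (wirtD f₂) z
        - wirtDBar (wirtD (wirtD f₁)) z + 2 * wirtD f₁ z * wirtDBar (wirtD f₁) z
      = (wirtD (wirtD (wirtDBar f₂)) z - 2 * wirtD f₂ z * wirtD (wirtDBar f₂) z)
        - (wirtD (wirtD (wirtDBar f₁)) z - 2 * wirtD f₁ z * wirtD (wirtDBar f₁) z) := lhs_eq
    _ = (1 / 4) * (Complex.exp (2 * f₁ z) *
          wirtD (fun w => -4 * Complex.exp (-2 * f₁ w) * wirtD (wirtDBar f₁) w) z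
        - Complex.exp (2 * f₂ z) *
          wirtD (fun w => -4 * Complex.exp (-2 * f₂ w) * wirtD (wirtDBar f₂) w) z) := by
      rw [m1.2, m2.2]; ring
end

section
/- Let Ω ⊆ ℂ be open and let f : Ω → ℂ be holomorphic with f′(z) ≠ 0 for all z ∈ Ω. Let η(z) = log|f′(z)| (the log-density of the pulled-back Euclidean metric f*(|dz|)). Then for every z ∈ Ω, ∂∂η(z) − (∂η(z))² = (1/2)·S(f)(z), where S(f) = (f″/f′)′ − (1/2)·(f″/f′)² is the classical Schwarzian derivative of f. -/
/-!
For a holomorphic `g` without zeros, the real differential of `log ‖g‖` is `v ↦ Re (g' v / g)`,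
and a real function with differential `Re (c ·)` has Wirtinger derivative `c / 2`; hence
`∂η = f'' / (2 f')` near every point of `Ω`. This function is holomorphic, and on holomorphic
functions `∂` is the complex derivative, so `∂∂η − (∂η)² = (1/2)(f''/f')' − (1/4)(f''/f')²`.
-/

open Filter Topology Complex ComplexConjugate

theorem Filter.EventuallyEq.wirtD_eq {u v : ℂ → ℂ} {z : ℂ} (h : u =ᶠ[𝓝 z] v) :
    wirtD u z = wirtD v z := by
  rw [wirtD, wirtD, h.fderiv_eq]

theorem Filter.EventuallyEq.wirtD {u v : ℂ → ℂ} {z : ℂ} (h : u =ᶠ[𝓝 z] v) :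
    wirtD u =ᶠ[𝓝 z] wirtD v :=
  h.eventuallyEq_nhds.mono fun _ hw => hw.wirtD_eq

theorem HasDerivAt.wirtD_eq {g : ℂ → ℂ} {c z : ℂ} (hg : HasDerivAt g c z) :
    wirtD g z = c := by
  rw [wirtD, (hg.hasFDerivAt.restrictScalars ℝ).fderiv]
  simp only [ContinuousLinearMap.coe_restrictScalars', ContinuousLinearMap.toSpanSingleton_apply,
    smul_eq_mul]
  linear_combination (-(1 / 2) * c) * I_mul_I

theorem wirtD_ofReal_of_hasFDerivAt {u : ℂ → ℝ} {L : ℂ →L[ℝ] ℝ} {c z : ℂ}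
    (hu : HasFDerivAt u L z) (hL : ∀ v, L v = (c * v).re) :
    wirtD (fun w => (u w : ℂ)) z = c / 2 := by
  rw [wirtD, show (fun w => (u w : ℂ)) = ofRealCLM ∘ u from rfl,
    (ofRealCLM.hasFDerivAt.comp z hu).fderiv]
  simp only [ContinuousLinearMap.coe_comp, Function.comp_apply, ofRealCLM_apply, hL]
  apply Complex.ext <;> simp [div_eq_inv_mul]

theorem HasDerivAt.wirtD_log_norm {h : ℂ → ℂ} {c z : ℂ} (hh : HasDerivAt h c z)
    (h0 : h z ≠ 0) :
    wirtD (fun w => (Real.log ‖h w‖ : ℂ)) z = c / h z / 2 := by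
  have hsq : ‖h z‖ ^ 2 ≠ 0 := by positivity
  have hlog := ((hh.hasFDerivAt.restrictScalars ℝ).norm_sq.log hsq).const_smul (2⁻¹ : ℝ)
  have heq : (fun w => Real.log ‖h w‖) = (2⁻¹ : ℝ) • fun w => Real.log (‖h w‖ ^ 2) := by
    funext w; simp [Real.log_pow]
  rw [← heq] at hlog
  refine wirtD_ofReal_of_hasFDerivAt hlog fun v => ?_
  have hdiv : c / h z * v = v * c * conj (h z) * ((normSq (h z))⁻¹ : ℝ) := by
    rw [div_eq_mul_inv, inv_def]; ring
  rw [hdiv, re_mul_ofReal, normSq_eq_norm_sq]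
  simp only [smul_apply, ContinuousLinearMap.comp_apply,
    ContinuousLinearMap.coe_restrictScalars', ContinuousLinearMap.toSpanSingleton_apply,
    smul_eq_mul, coe_innerSL_apply, Complex.inner, nsmul_eq_mul, Nat.cast_ofNat]
  ring

theorem AnalyticAt.wirtD_log_norm_eventuallyEq {g : ℂ → ℂ} {z : ℂ} (hg : AnalyticAt ℂ g z)
    (h0 : g z ≠ 0) :
    wirtD (fun w => (Real.log ‖g w‖ : ℂ)) =ᶠ[𝓝 z] fun w => deriv g w / g w / 2 := by
  filter_upwards [hg.eventually_analyticAt, hg.continuousAt.eventually_ne h0] with w hw hw0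
  exact hw.differentiableAt.hasDerivAt.wirtD_log_norm hw0

/-- The identity `S(f) = 2·B(|dz|, f*(|dz|))` of the paper: if `f` is holomorphic with
nonvanishing derivative on an open set `Ω ⊆ ℂ` and `η = log|f′|` is the log-density of
the pulled-back Euclidean metric, then `∂∂η − (∂η)² = (1/2)·S(f)` on `Ω`, where
`S(f) = (f″/f′)′ − (1/2)(f″/f′)²` is the classical Schwarzian derivative. -/
theorem metric_schwarzian_eq_half_classical (Ω : Set ℂ) (hΩ : IsOpen Ω)
    (f : ℂ → ℂ) (hf : DifferentiableOn ℂ f Ω)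
    (hf' : ∀ z ∈ Ω, deriv f z ≠ 0)
    (η : ℂ → ℝ) (hη : ∀ z ∈ Ω, η z = Real.log ‖deriv f z‖) :
    ∀ z ∈ Ω,
      wirtD (wirtD fun w => (η w : ℂ)) z - (wirtD (fun w => (η w : ℂ)) z) ^ 2
        = (1 / 2) * (deriv (fun w => deriv (deriv f) w / deriv f w) z
            - (1 / 2) * (deriv (deriv f) z / deriv f z) ^ 2) := by
  intro z hz
  have hg : AnalyticAt ℂ (deriv f) z := (hf.analyticOnNhd hΩ).deriv z hz
  have hη_nhds : (fun w => (η w : ℂ)) =ᶠ[𝓝 z] fun w => (Real.log ‖deriv f w‖ : ℂ) :=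
    eventually_of_mem (hΩ.mem_nhds hz) fun w hw => congrArg ofReal (hη w hw)
  have hdη := hη_nhds.wirtD.trans (hg.wirtD_log_norm_eventuallyEq (hf' z hz))
  have hquot : DifferentiableAt ℂ (fun w => deriv (deriv f) w / deriv f w) z :=
    hg.deriv.differentiableAt.div hg.differentiableAt (hf' z hz)
  rw [hdη.wirtD_eq, (hquot.hasDerivAt.div_const 2).wirtD_eq, hdη.eq_of_nhds]
  ring
end
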